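/- The I-sparse set topology is finer than the I-density topology: every member of T_I belongs to 𝒰, i.e. if E ⊆ ℝ is Lebesgue measurable and I-d₋(x, E) = 1 for every x ∈ E, then ℝ \ E is I-sparse at every point of E. -/

import Mathlib

open MeasureTheory Filter Set
open scoped ENNReal

noncomputable section

/-- A nontrivial admissible ideal of subsets of ℕ: closed under subsets and
finite unions, contains every finite set, and does not contain ℕ itself. -/
structure AdmissibleIdeal : Type where
  carrier : Set (Set ℕ)
  subset_mem : ∀ ⦃A B : Set ℕ⦄, A ∈ carrier → B ⊆ A → B ∈ carrier
  union_mem : ∀ ⦃A B : Set ℕ⦄, A ∈ carrier → B ∈ carrier → A ∪ B ∈ carrier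
  finite_mem : ∀ A : Set ℕ, A.Finite → A ∈ carrier
  univ_not_mem : (Set.univ : Set ℕ) ∉ carrier

/-- The filter F(I) = {M ⊆ ℕ : ℕ \ M ∈ I} associated with the ideal I. -/
def AdmissibleIdeal.filter (I : AdmissibleIdeal) : Filter ℕ :=
  Filter.comk (· ∈ I.carrier) (I.finite_mem ∅ Set.finite_empty)
    (fun _t ht _s hs => I.subset_mem ht hs)
    (fun _s hs _t ht => I.union_mem hs ht)

/-- A sequence of closed intervals admissible about the point `p`:
each `J n` is a closed interval containing `p`, and
`{n : 0 < λ(J n) < 1/n} ∈ F(I)`. -/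
def AdmissibleSeq (I : AdmissibleIdeal) (p : ℝ) (J : ℕ → Set ℝ) : Prop :=
  (∀ n, ∃ a b : ℝ, a ≤ b ∧ J n = Set.Icc a b) ∧ (∀ n, p ∈ J n) ∧
    {n : ℕ | 0 < volume (J n) ∧ volume (J n) < (n : ℝ≥0∞)⁻¹} ∈ I.filter

/-- The sequence n ↦ λ(E ∩ J n)/λ(J n) (interpreted as 0 when λ(J n) = 0). -/
def ratioSeq (E : Set ℝ) (J : ℕ → Set ℝ) : ℕ → ℝ :=
  fun n => (volume (E ∩ J n) / volume (J n)).toReal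

/-- Upper I-density of `E` at `p`: sup over admissible sequences of the
limsup along `F(I)` of the measure ratios. -/
def upperIDensity (I : AdmissibleIdeal) (p : ℝ) (E : Set ℝ) : ℝ :=
  sSup {l : ℝ | ∃ J : ℕ → Set ℝ, AdmissibleSeq I p J ∧
    l = Filter.limsup (ratioSeq E J) I.filter}

/-- Lower I-density of `E` at `p`: inf over admissible sequences of the
liminf along `F(I)` of the measure ratios. -/
def lowerIDensity (I : AdmissibleIdeal) (p : ℝ) (E : Set ℝ) : ℝ :=
  sInf {l : ℝ | ∃ J : ℕ → Set ℝ, AdmissibleSeq I p J ∧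
    l = Filter.liminf (ratioSeq E J) I.filter}

/-- `C` is a measurable cover of `A`. -/
def IsMeasurableCover (C A : Set ℝ) : Prop :=
  MeasurableSet C ∧ A ⊆ C ∧
    ∀ F : Set ℝ, MeasurableSet F → F ⊆ C \ A → volume F = 0

/-- `A` is I-sparse at `x`, i.e. `A ∈ S_I(x)`. -/
def ISparseAt (I : AdmissibleIdeal) (A : Set ℝ) (x : ℝ) : Prop :=
  ∀ B : Set ℝ, MeasurableSet B → upperIDensity I x B < 1 →
    ∀ C : Set ℝ, IsMeasurableCover C A → upperIDensity I x (C ∪ B) < 1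

/-- The I-density topology T_I. -/
def IDensityTopology (I : AdmissibleIdeal) : Set (Set ℝ) :=
  {E | MeasurableSet E ∧ ∀ x ∈ E, lowerIDensity I x E = 1}

/-- The I-sparse set topology 𝒰. -/
def sparseTop (I : AdmissibleIdeal) : Set (Set ℝ) :=
  {E | ∀ x ∈ E, ISparseAt I Eᶜ x}

open scoped Topology

/-!
Let `E ∈ T_I`, `x ∈ E`, and let `C` be a measurable cover of `Eᶜ`, so that `C ⊆ Eᶜ` up to a null
set. Along every admissible sequence `(J n)` about `x`, the ratio of `E` tends to `1` along `F(I)`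
because its lower density is `1`, hence the ratio of `Eᶜ` tends to `0`. Since the ratio of
`C ∪ B` is at most the ratio of `Eᶜ` plus the ratio of `B`, its limsup is at most that of `B`.
Taking the supremum over all admissible sequences gives `I-d⁻(x, C ∪ B) ≤ I-d⁻(x, B) < 1`.
-/

instance AdmissibleIdeal.filter_neBot (I : AdmissibleIdeal) : I.filter.NeBot := by
  rw [Filter.neBot_iff, Ne, ← empty_mem_iff_bot, AdmissibleIdeal.filter, Filter.mem_comk,
    compl_empty]
  exact I.univ_not_mem

lemma IsMeasurableCover.ae_le {C A : Set ℝ} (hC : IsMeasurableCover C A) (hA : MeasurableSet A) :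
    C ≤ᵐ[volume] A :=
  ae_le_set.mpr (hC.2.2 _ (hC.1.diff hA) subset_rfl)

lemma measure_inter_div_le_one (S K : Set ℝ) : volume (S ∩ K) / volume K ≤ 1 :=
  ENNReal.div_le_of_le_mul (by simpa using measure_mono inter_subset_right)

lemma measure_inter_div_ne_top (S K : Set ℝ) : volume (S ∩ K) / volume K ≠ ⊤ :=
  ne_top_of_le_ne_top ENNReal.one_ne_top (measure_inter_div_le_one S K)

section ratioSeq

variable {S T : Set ℝ} {J : ℕ → Set ℝ}

lemma ratioSeq_nonneg (S : Set ℝ) (J : ℕ → Set ℝ) (n : ℕ) : 0 ≤ ratioSeq S J n :=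
  ENNReal.toReal_nonneg

lemma ratioSeq_le_one (S : Set ℝ) (J : ℕ → Set ℝ) (n : ℕ) : ratioSeq S J n ≤ 1 :=
  ENNReal.toReal_le_of_le_ofReal zero_le_one
    (by simpa using measure_inter_div_le_one S (J n))

lemma ratioSeq_mono_ae (h : S ≤ᵐ[volume] T) (n : ℕ) : ratioSeq S J n ≤ ratioSeq T J n :=
  ENNReal.toReal_mono (measure_inter_div_ne_top T (J n))
    (ENNReal.div_le_div_right (measure_mono_ae (h.inter EventuallyLE.rfl)) _)

lemma ratioSeq_union_le (S T : Set ℝ) (J : ℕ → Set ℝ) (n : ℕ) :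
    ratioSeq (S ∪ T) J n ≤ ratioSeq S J n + ratioSeq T J n := by
  have hS := measure_inter_div_ne_top S (J n)
  have hT := measure_inter_div_ne_top T (J n)
  unfold ratioSeq
  rw [← ENNReal.toReal_add hS hT]
  refine ENNReal.toReal_mono (ENNReal.add_ne_top.mpr ⟨hS, hT⟩) ?_
  rw [ENNReal.div_add_div_same, union_inter_distrib_right]
  exact ENNReal.div_le_div_right (measure_union_le _ _) _

lemma ratioSeq_add_ratioSeq_compl (hS : MeasurableSet S) {n : ℕ} (h0 : volume (J n) ≠ 0)
    (htop : volume (J n) ≠ ⊤) : ratioSeq S J n + ratioSeq Sᶜ J n = 1 := by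
  have hS' := measure_inter_div_ne_top S (J n)
  have hSc := measure_inter_div_ne_top Sᶜ (J n)
  unfold ratioSeq
  rw [← ENNReal.toReal_add hS' hSc, ENNReal.div_add_div_same, inter_comm S, inter_comm Sᶜ,
    ← sdiff_eq, measure_inter_add_sdiff _ hS, ENNReal.div_self h0 htop, ENNReal.toReal_one]

lemma isBoundedUnder_le_ratioSeq (f : Filter ℕ) (S : Set ℝ) (J : ℕ → Set ℝ) :
    IsBoundedUnder (· ≤ ·) f (ratioSeq S J) :=
  isBoundedUnder_of ⟨1, ratioSeq_le_one S J⟩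

lemma isBoundedUnder_ge_ratioSeq (f : Filter ℕ) (S : Set ℝ) (J : ℕ → Set ℝ) :
    IsBoundedUnder (· ≥ ·) f (ratioSeq S J) :=
  isBoundedUnder_of ⟨0, ratioSeq_nonneg S J⟩

lemma limsup_ratioSeq_le_of_ae_le_union {f : Filter ℕ} [f.NeBot] {N : Set ℝ}
    (hN : Tendsto (ratioSeq N J) f (𝓝 0)) (hS : S ≤ᵐ[volume] (N ∪ T : Set ℝ)) :
    limsup (ratioSeq S J) f ≤ limsup (ratioSeq T J) f := by
  have hbdd := isBoundedUnder_le_ratioSeq f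
  have hcobdd (U : Set ℝ) := (isBoundedUnder_ge_ratioSeq f U J).isCoboundedUnder_le
  calc limsup (ratioSeq S J) f
      ≤ limsup (ratioSeq N J + ratioSeq T J) f :=
        limsup_le_limsup (Eventually.of_forall fun n =>
          (ratioSeq_mono_ae hS n).trans (ratioSeq_union_le N T J n)) (hcobdd S)
          (isBoundedUnder_le_add (hbdd N J) (hbdd T J))
    _ ≤ limsup (ratioSeq N J) f + limsup (ratioSeq T J) f :=
        limsup_add_le (isBoundedUnder_ge_ratioSeq f N J) (hbdd N J) (hcobdd T) (hbdd T J)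
    _ = limsup (ratioSeq T J) f := by rw [hN.limsup_eq, zero_add]

end ratioSeq

section density

variable {I : AdmissibleIdeal} {p : ℝ} {E S : Set ℝ} {J : ℕ → Set ℝ}

lemma AdmissibleSeq.eventually_measure_ne_zero_ne_top (hJ : AdmissibleSeq I p J) :
    ∀ᶠ n in I.filter, volume (J n) ≠ 0 ∧ volume (J n) ≠ ⊤ :=
  Filter.mem_of_superset hJ.2.2 fun _ hn => ⟨hn.1.ne', (hn.2.trans_le le_top).ne⟩

lemma admissibleSeq_Icc (I : AdmissibleIdeal) (p : ℝ) :
    AdmissibleSeq I p (fun n => Icc p (p + ((n : ℝ) + 1)⁻¹)) := by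
  have hpos (n : ℕ) : (0 : ℝ) < ((n : ℝ) + 1)⁻¹ := by positivity
  refine ⟨fun n => ⟨_, _, (lt_add_of_pos_right p (hpos n)).le, rfl⟩,
    fun n => left_mem_Icc.mpr (lt_add_of_pos_right p (hpos n)).le,
    Filter.Eventually.of_forall fun n => ?_⟩
  have hvol : volume (Icc p (p + ((n : ℝ) + 1)⁻¹)) = ((n : ℝ≥0∞) + 1)⁻¹ := by
    rw [Real.volume_Icc, add_sub_cancel_left, ENNReal.ofReal_inv_of_pos (by positivity)]
    norm_cast
  rw [hvol]
  exact ⟨ENNReal.inv_pos.mpr (by simp),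
    ENNReal.inv_lt_inv.mpr (ENNReal.lt_add_right (ENNReal.natCast_ne_top n) one_ne_zero)⟩

lemma limsup_ratioSeq_le_upperIDensity (hJ : AdmissibleSeq I p J) :
    limsup (ratioSeq S J) I.filter ≤ upperIDensity I p S :=
  le_csSup ⟨1, fun _ ⟨K, _, hl⟩ => hl ▸ limsup_le_of_le
    (isBoundedUnder_ge_ratioSeq _ S K).isCoboundedUnder_le
    (Eventually.of_forall (ratioSeq_le_one S K))⟩ ⟨J, hJ, rfl⟩

lemma upperIDensity_le_of_forall_limsup_le {c : ℝ}
    (h : ∀ J, AdmissibleSeq I p J → limsup (ratioSeq S J) I.filter ≤ c) :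
    upperIDensity I p S ≤ c :=
  csSup_le ⟨_, _, admissibleSeq_Icc I p, rfl⟩ fun _ ⟨J, hJ, hl⟩ => hl ▸ h J hJ

lemma lowerIDensity_le_liminf (hJ : AdmissibleSeq I p J) :
    lowerIDensity I p S ≤ liminf (ratioSeq S J) I.filter :=
  csInf_le ⟨0, fun _ ⟨K, _, hl⟩ => hl ▸ le_liminf_of_le
    (isBoundedUnder_le_ratioSeq _ S K).isCoboundedUnder_ge
    (Eventually.of_forall (ratioSeq_nonneg S K))⟩ ⟨J, hJ, rfl⟩

lemma tendsto_ratioSeq_one_of_lowerIDensity_eq_one (hE : lowerIDensity I p E = 1)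
    (hJ : AdmissibleSeq I p J) : Tendsto (ratioSeq E J) I.filter (𝓝 1) :=
  tendsto_of_le_liminf_of_limsup_le (hE ▸ lowerIDensity_le_liminf hJ)
    (limsup_le_of_le (isBoundedUnder_ge_ratioSeq _ E J).isCoboundedUnder_le
      (Eventually.of_forall (ratioSeq_le_one E J)))
    (isBoundedUnder_le_ratioSeq _ E J) (isBoundedUnder_ge_ratioSeq _ E J)

lemma tendsto_ratioSeq_compl_zero_of_lowerIDensity_eq_one (hEm : MeasurableSet E)
    (hE : lowerIDensity I p E = 1) (hJ : AdmissibleSeq I p J) :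
    Tendsto (ratioSeq Eᶜ J) I.filter (𝓝 0) := by
  have hsub : Tendsto (fun n => 1 - ratioSeq E J n) I.filter (𝓝 0) := by
    simpa using (tendsto_ratioSeq_one_of_lowerIDensity_eq_one hE hJ).const_sub 1
  refine hsub.congr' ?_
  filter_upwards [hJ.eventually_measure_ne_zero_ne_top] with n hn
  linarith [ratioSeq_add_ratioSeq_compl (J := J) hEm hn.1 hn.2]

end density

/-- The I-sparse set topology is finer than the I-density topology. -/
theorem iDensityTopology_subset_sparseTop (I : AdmissibleIdeal) :
    IDensityTopology I ⊆ sparseTop I := by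
  rintro E ⟨hEm, hEd⟩ x hx B - hB C hC
  refine lt_of_le_of_lt (upperIDensity_le_of_forall_limsup_le fun J hJ => ?_) hB
  exact (limsup_ratioSeq_le_of_ae_le_union
    (tendsto_ratioSeq_compl_zero_of_lowerIDensity_eq_one hEm (hEd x hx) hJ)
    ((hC.ae_le hEm.compl).union EventuallyLE.rfl)).trans (limsup_ratioSeq_le_upperIDensity hJ)
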